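/- Let n ≥ 1 and k ≥ 0, and let P^n be a coherent exchangeable lower prevision on ℒ(𝒳^n) with count distribution Q^n(h) := P^n(h∘T^n). For a gamble g on 𝒩^n define ḡ ∈ ℒ(𝒩^{n+k}) by ḡ(μ) := Σ_{m∈𝒩^n} (ν(m)·ν(μ−m)/ν(μ))·g(m), where ν(μ−m) := 0 unless m ≤ μ componentwise. Then there exists a coherent exchangeable lower prevision on ℒ(𝒳^{n+k}) that dominates the assessments f̃ ↦ P^n(f) for all gambles f on 𝒳^n (f̃ the cylindrical extension of f to 𝒳^{n+k}) if and only if max_{μ∈𝒩^{n+k}} ḡ(μ) ≥ Q^n(g) for every gamble g on 𝒩^n. -/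

import Mathlib

open Finset Filter Topology

/-- A coherent lower prevision on the gambles over a finite nonempty space `Ω`. -/
def LowerPrevCoherent {Ω : Type*} [Fintype Ω] [Nonempty Ω] (P : (Ω → ℝ) → ℝ) : Prop :=
  (∀ f : Ω → ℝ, sInf (Set.range f) ≤ P f) ∧
  (∀ (f : Ω → ℝ) (l : ℝ), 0 ≤ l → P (fun ω => l * f ω) = l * P f) ∧
  (∀ f g : Ω → ℝ, P f + P g ≤ P (f + g))

/-- A linear prevision on the gambles over a finite nonempty space `Ω`. -/
def LinearPrevision {Ω : Type*} [Fintype Ω] [Nonempty Ω] (P : (Ω → ℝ) → ℝ) : Prop :=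
  (∀ f g : Ω → ℝ, P (f + g) = P f + P g) ∧
  (∀ (l : ℝ) (f : Ω → ℝ), P (fun ω => l * f ω) = l * P f) ∧
  (∀ f : Ω → ℝ, (∀ ω, 0 ≤ f ω) → 0 ≤ P f) ∧
  P (fun _ => 1) = 1

/-- Exchangeability of a lower prevision on gambles on `X^N`:
`P (πf − f) ≥ 0` for every gamble `f` and every permutation `π`. -/
def Exchangeable {X : Type*} {N : ℕ} (P : ((Fin N → X) → ℝ) → ℝ) : Prop :=
  ∀ (f : (Fin N → X) → ℝ) (π : Equiv.Perm (Fin N)),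
    0 ≤ P (fun x => f (fun k => x (π k)) - f x)

/-- The set of count vectors `𝒩^n`. -/
abbrev CVec (X : Type*) [Fintype X] (n : ℕ) : Type _ := {m : X → ℕ // ∑ x, m x = n}

noncomputable instance {X : Type*} [Fintype X] [DecidableEq X] (n : ℕ) : Fintype (CVec X n) := by
  have key : ∀ (m : CVec X n) (x : X), m.1 x < n + 1 := by
    intro m x
    have h1 : m.1 x ≤ ∑ y, m.1 y :=
      Finset.single_le_sum (fun i _ => Nat.zero_le _) (Finset.mem_univ x)
    have h2 := m.2
    omega
  exact Fintype.ofInjective (fun m : CVec X n => fun x => (⟨m.1 x, key m x⟩ : Fin (n+1)))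
    (fun a b hab => Subtype.ext (funext fun x => congrArg Fin.val (congrFun hab x)))

instance {X : Type*} [Fintype X] [DecidableEq X] [Nonempty X] (n : ℕ) :
    Nonempty (CVec X n) :=
  ⟨⟨fun x => if x = Classical.arbitrary X then n else 0, by simp⟩⟩

/-- The counting map `T^n : X^n → 𝒩^n`. -/
def countMap {X : Type*} [Fintype X] [DecidableEq X] (n : ℕ) (z : Fin n → X) : CVec X n :=
  ⟨fun x => (Finset.univ.filter fun k => z k = x).card, by
    have h := Finset.card_eq_sum_card_fiberwise (f := z) (s := Finset.univ) (t := Finset.univ)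
      (fun k _ => Finset.mem_univ (z k))
    simpa using h.symm⟩

/-- `ν(m) = n!/∏ₓ mₓ!` for a count vector `m ∈ 𝒩^n`. -/
def nu {X : Type*} [Fintype X] {n : ℕ} (m : CVec X n) : ℕ :=
  Nat.multinomial Finset.univ m.1

/-- `ν(μ − m)`, which is `0` unless `m ≤ μ` componentwise. -/
def nuSub {X : Type*} [Fintype X] {n k : ℕ} (μ : CVec X (n + k)) (m : CVec X n) : ℕ :=
  if ∀ x, m.1 x ≤ μ.1 x then Nat.multinomial Finset.univ (fun x => μ.1 x - m.1 x) else 0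

/-- The multiple hyper-geometric prevision `MuHy^n(f|m) = (1/ν(m)) ∑_{z∈[m]} f(z)`. -/
noncomputable def MuHy {X : Type*} [Fintype X] [DecidableEq X] {n : ℕ}
    (f : (Fin n → X) → ℝ) (m : CVec X n) : ℝ :=
  (∑ z ∈ Finset.univ.filter fun z : Fin n → X => countMap n z = m, f z) / (nu m : ℝ)

/-- The `X`-simplex `Σ_X`, as a subtype of `X → ℝ`. -/
abbrev SimplexPt (X : Type*) [Fintype X] : Type _ :=
  {θ : X → ℝ // (∀ x, 0 ≤ θ x) ∧ ∑ x, θ x = 1}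

/-- The Bernstein basis polynomial `B_m(θ) = ν(m) ∏ₓ θₓ^{mₓ}`. -/
noncomputable def Bern {X : Type*} [Fintype X] {n : ℕ} (m : CVec X n) (θ : X → ℝ) : ℝ :=
  (nu m : ℝ) * ∏ x, θ x ^ m.1 x

/-- The count multinomial expectation `CoMn^n(g|θ) = ∑_m g(m) B_m(θ)`. -/
noncomputable def CoMn {X : Type*} [Fintype X] [DecidableEq X] {n : ℕ} (g : CVec X n → ℝ) (θ : X → ℝ) : ℝ :=
  ∑ m : CVec X n, g m * Bern m θ

/-- The multinomial expectation `Mn^n(f|θ) = ∑_z f(z) ∏ₓ θₓ^{Tₓ(z)}`. -/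
noncomputable def Mn {X : Type*} [Fintype X] [DecidableEq X] {n : ℕ}
    (f : (Fin n → X) → ℝ) (θ : X → ℝ) : ℝ :=
  ∑ z : Fin n → X, f z * ∏ x, θ x ^ (countMap n z).1 x

/-- `CoMn^n(g|·)` as a function on the simplex. -/
noncomputable def CoMnP {X : Type*} [Fintype X] [DecidableEq X] {n : ℕ} (g : CVec X n → ℝ)
    (θ : SimplexPt X) : ℝ :=
  CoMn g θ.1

/-- `Mn^n(f|·)` as a function on the simplex. -/
noncomputable def MnP {X : Type*} [Fintype X] [DecidableEq X] {n : ℕ}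
    (f : (Fin n → X) → ℝ) (θ : SimplexPt X) : ℝ :=
  Mn f θ.1

/-- Polynomial gambles on the simplex: the set `𝒱(Σ_X)`. -/
def IsPolyGamble {X : Type*} [Fintype X] [DecidableEq X] (p : SimplexPt X → ℝ) : Prop :=
  ∃ n : ℕ, 1 ≤ n ∧ ∃ g : CVec X n → ℝ, p = fun θ => CoMnP g θ

/-- Coherence of a functional on the linear space `𝒱(Σ_X)` of polynomial gambles. -/
def CoherentOnPoly {X : Type*} [Fintype X] [DecidableEq X] (S : (SimplexPt X → ℝ) → ℝ) : Prop :=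
  (∀ p, IsPolyGamble p → sInf (Set.range p) ≤ S p) ∧
  (∀ p, IsPolyGamble p → ∀ l : ℝ, 0 ≤ l → S (fun θ => l * p θ) = l * S p) ∧
  (∀ p q, IsPolyGamble p → IsPolyGamble q → S p + S q ≤ S (p + q))

/-- Cylindrical extension of a gamble on `X^n` to `X^{n+k}`. -/
def cylExt {X : Type*} {n k : ℕ} (f : (Fin n → X) → ℝ) : (Fin (n + k) → X) → ℝ :=
  fun z => f fun i => z (Fin.castLE (Nat.le_add_right n k) i)

/-- Time consistency of a family of lower previsions on the `X^n`. -/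
def PTimeConsistent {X : Type*} (P : ∀ n : ℕ, ((Fin n → X) → ℝ) → ℝ) : Prop :=
  ∀ n : ℕ, 1 ≤ n → ∀ (k : ℕ) (f : (Fin n → X) → ℝ), P n f = P (n + k) (cylExt f)

/-- Time consistency of a family of count lower previsions on the `𝒩^n`. -/
def QTimeConsistent {X : Type*} [Fintype X] [DecidableEq X] (Q : ∀ n : ℕ, (CVec X n → ℝ) → ℝ) : Prop :=
  ∀ n : ℕ, 1 ≤ n → ∀ (k : ℕ) (h : CVec X n → ℝ),
    Q n h = Q (n + k) (fun μ => ∑ m : CVec X n, ((nuSub μ m : ℝ) * (nu m : ℝ) / (nu μ : ℝ)) * h m)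

/-- The relative frequency vector `m/n ∈ Σ_X` of a count vector `m ∈ 𝒩^n`, `n ≥ 1`. -/
noncomputable def freqPt {X : Type*} [Fintype X] {n : ℕ} (hn : 0 < n) (m : CVec X n) :
    SimplexPt X :=
  ⟨fun x => (m.1 x : ℝ) / n,
   fun x => div_nonneg (Nat.cast_nonneg _) (Nat.cast_nonneg _),
   by
    rw [← Finset.sum_div]
    have h : (∑ x, (m.1 x : ℝ)) = (n : ℝ) := by exact_mod_cast m.2
    rw [h]
    exact div_self (Nat.cast_ne_zero.mpr hn.ne')⟩

/-- `ḡ(μ) = ∑_m (ν(m) ν(μ−m) / ν(μ)) g(m)`. -/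
noncomputable def gbar {X : Type*} [Fintype X] [DecidableEq X] {n k : ℕ}
    (g : CVec X n → ℝ) (μ : CVec X (n + k)) : ℝ :=
  ∑ m : CVec X n, ((nu m : ℝ) * (nuSub μ m : ℝ) / (nu μ : ℝ)) * g m

/-!
A coherent exchangeable lower prevision can only gain when a gamble `f` on `X^N` is replaced by
its average `MuHy f ∘ T` over permutations, and averaging the cylindrical extension `f̃` over the
orbits of `X^{n+k}` gives `ḡ` for `g = MuHy f` (hypergeometric marginalisation). So an
extension `E` forces `Q g = P (g ∘ T) ≤ E (ḡ ∘ T) ≤ max ḡ`. Conversely, if `Q g ≤ max ḡ` for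
all `g`, the natural extension `E' h = sup {Q g | ḡ ≤ h}` is a coherent lower prevision on
`𝒩^{n+k}`, and `f ↦ E' (MuHy f)` is an exchangeable extension:
`P f ≤ Q (MuHy f) ≤ E' (MuHy f̃)`.
-/

namespace LowerPrevCoherent

variable {Ω : Type*} [Fintype Ω] [Nonempty Ω] {P : (Ω → ℝ) → ℝ}

theorem map_zero (hP : LowerPrevCoherent P) : P 0 = 0 := by
  calc P 0 = P (fun ω => 0 * (0 : Ω → ℝ) ω) := by congr; ext; simp
    _ = 0 := by rw [hP.2.1 0 0 le_rfl, zero_mul]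

theorem map_const (hP : LowerPrevCoherent P) (c : ℝ) : P (fun _ => c) = c := by
  have lower (d : ℝ) : d ≤ P (fun _ => d) := by
    simpa [Set.range_const] using hP.1 (fun _ => d)
  have hsum := hP.2.2 (fun _ => c) (fun _ => -c)
  rw [show (fun _ : Ω => c) + (fun _ => -c) = 0 by ext; simp, hP.map_zero] at hsum
  linarith [lower c, lower (-c)]

theorem mono (hP : LowerPrevCoherent P) {f g : Ω → ℝ} (h : f ≤ g) : P f ≤ P g := by
  have hsum := hP.2.2 f (g - f)
  rw [add_sub_cancel] at hsum
  have : 0 ≤ P (g - f) :=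
    (le_csInf (Set.range_nonempty _) (by rintro _ ⟨ω, rfl⟩; simpa using h ω)).trans (hP.1 _)
  linarith

theorem le_of_forall_le (hP : LowerPrevCoherent P) {f : Ω → ℝ} {c : ℝ} (h : ∀ ω, f ω ≤ c) :
    P f ≤ c :=
  hP.map_const c ▸ hP.mono h

theorem sum_le (hP : LowerPrevCoherent P) {ι : Type*} (s : Finset ι) (g : ι → Ω → ℝ) :
    ∑ i ∈ s, P (g i) ≤ P (∑ i ∈ s, g i) := by
  classical
  induction s using Finset.cons_induction with
  | empty => simp [hP.map_zero]
  | cons a s ha ih =>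
    rw [Finset.sum_cons, Finset.sum_cons]
    linarith [hP.2.2 (g a) (∑ i ∈ s, g i)]

theorem comp_linearMap {Ω' : Type*} [Fintype Ω'] [Nonempty Ω'] (hP : LowerPrevCoherent P)
    (M : (Ω' → ℝ) →ₗ[ℝ] (Ω → ℝ)) (hM : ∀ f ω, sInf (Set.range f) ≤ M f ω) :
    LowerPrevCoherent fun f => P (M f) := by
  refine ⟨fun f => ?_, fun f l hl => ?_, fun f g => ?_⟩
  · calc sInf (Set.range f) = P (fun _ => sInf (Set.range f)) := (hP.map_const _).symm
      _ ≤ P (M f) := hP.mono (hM f)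
  · exact (congrArg P (M.map_smul l f)).trans (hP.2.1 (M f) l hl)
  · simpa only [map_add] using hP.2.2 (M f) (M g)

end LowerPrevCoherent

section NaturalExtension

variable {Ω Ω' : Type*} [Fintype Ω'] {Q : (Ω → ℝ) → ℝ} {L : (Ω → ℝ) →ₗ[ℝ] (Ω' → ℝ)}

/-- The least value that the assessments "`L g` is worth at least `Q g`" force on `h`. -/
noncomputable def naturalExtension (Q : (Ω → ℝ) → ℝ) (L : (Ω → ℝ) →ₗ[ℝ] (Ω' → ℝ))
    (h : Ω' → ℝ) : ℝ :=
  sSup (Q '' {g | L g ≤ h})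

theorem bddAbove_image_setOf_le (hdom : ∀ g, ∃ ω, Q g ≤ L g ω) (h : Ω' → ℝ) :
    BddAbove (Q '' {g | L g ≤ h}) := by
  obtain ⟨B, hB⟩ := (Set.finite_range h).bddAbove
  refine ⟨B, ?_⟩
  rintro _ ⟨g, hg, rfl⟩
  obtain ⟨ω, hω⟩ := hdom g
  exact hω.trans ((hg ω).trans (hB (Set.mem_range_self ω)))

theorem le_naturalExtension (hdom : ∀ g, ∃ ω, Q g ≤ L g ω) {g : Ω → ℝ} {h : Ω' → ℝ}
    (hg : L g ≤ h) : Q g ≤ naturalExtension Q L h :=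
  le_csSup (bddAbove_image_setOf_le hdom h) ⟨g, hg, rfl⟩

theorem naturalExtension_le (hL : ∀ c, L (fun _ => c) = fun _ => c) {h : Ω' → ℝ} {c : ℝ}
    (hle : ∀ g, L g ≤ h → Q g ≤ c) : naturalExtension Q L h ≤ c := by
  refine csSup_le ⟨_, fun _ => sInf (Set.range h), ?_, rfl⟩ (by rintro _ ⟨g, hg, rfl⟩; exact hle g hg)
  rw [Set.mem_ofPred_eq, hL]
  exact fun ω => csInf_le (Set.finite_range h).bddBelow (Set.mem_range_self ω)

theorem mul_naturalExtension_le_smul [Fintype Ω] [Nonempty Ω] (hQ : LowerPrevCoherent Q)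
    (hL : ∀ c, L (fun _ => c) = fun _ => c) (hdom : ∀ g, ∃ ω, Q g ≤ L g ω) {l : ℝ} (hl : 0 < l)
    (h : Ω' → ℝ) : l * naturalExtension Q L h ≤ naturalExtension Q L (l • h) := by
  rw [← le_div_iff₀' hl]
  refine naturalExtension_le hL fun g hg => ?_
  rw [le_div_iff₀' hl, ← hQ.2.1 g l hl.le]
  refine le_naturalExtension hdom ?_
  exact (L.map_smul l g).trans_le (smul_le_smul_of_nonneg_left hg hl.le)

theorem LowerPrevCoherent.naturalExtension [Fintype Ω] [Nonempty Ω] [Nonempty Ω']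
    (hQ : LowerPrevCoherent Q)
    (hL : ∀ c, L (fun _ => c) = fun _ => c) (hdom : ∀ g, ∃ ω, Q g ≤ L g ω) :
    LowerPrevCoherent (naturalExtension Q L) := by
  refine ⟨fun h => ?_, fun h l hl => ?_, fun h₁ h₂ => ?_⟩
  · rw [← hQ.map_const (sInf (Set.range h))]
    refine le_naturalExtension hdom ?_
    rw [hL]
    exact fun ω => csInf_le (Set.finite_range h).bddBelow (Set.mem_range_self ω)
  · rcases hl.eq_or_lt with rfl | hl
    · simp only [zero_mul]
      refine le_antisymm (naturalExtension_le hL fun g hg => ?_) ?_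
      · obtain ⟨ω, hω⟩ := hdom g
        exact hω.trans (hg ω)
      · calc (0 : ℝ) = Q 0 := hQ.map_zero.symm
          _ ≤ _ := le_naturalExtension hdom (_root_.map_zero L).le
    · refine le_antisymm ?_ (mul_naturalExtension_le_smul hQ hL hdom hl h)
      have := mul_naturalExtension_le_smul hQ hL hdom (inv_pos.mpr hl) (l • h)
      rw [inv_smul_smul₀ hl.ne'] at this
      rwa [← le_div_iff₀' (inv_pos.mpr hl), div_inv_eq_mul, mul_comm] at this
  · rw [← le_sub_iff_add_le]
    refine naturalExtension_le hL fun g₁ hg₁ => ?_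
    rw [le_sub_comm]
    refine naturalExtension_le hL fun g₂ hg₂ => ?_
    rw [le_sub_iff_add_le']
    exact (hQ.2.2 g₁ g₂).trans (le_naturalExtension hdom (by simpa using add_le_add hg₁ hg₂))

end NaturalExtension

section Orbits

open Nat

variable {X : Type*} [Fintype X] [DecidableEq X] {N : ℕ}

theorem countMap_comp_perm (z : Fin N → X) (π : Equiv.Perm (Fin N)) :
    countMap N (z ∘ π) = countMap N z := by
  refine Subtype.ext (funext fun x => ?_)
  change #{k | z (π k) = x} = #{k | z k = x}
  exact Finset.card_bij (fun k _ => π k) (fun k hk => by simpa using hk)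
    (fun _ _ _ _ h => π.injective h) (fun b hb => ⟨π.symm b, by simpa using hb, by simp⟩)

def permFiberEquiv (z y : Fin N → X) :
    {π : Equiv.Perm (Fin N) // z ∘ π = y} ≃
      (∀ x : X, {k : Fin N // y k = x} ≃ {k : Fin N // z k = x}) where
  toFun π x :=
    { toFun k := ⟨π.1 k.1, (congrFun π.2 k.1).trans k.2⟩
      invFun j := ⟨π.1.symm j.1, (congrFun π.2 _).symm.trans (by simpa using j.2)⟩
      left_inv _ := by simp
      right_inv _ := by simp }
  invFun e :=
    ⟨(Equiv.sigmaFiberEquiv y).symm.trans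
        ((Equiv.sigmaCongrRight e).trans (Equiv.sigmaFiberEquiv z)),
     funext fun k => (e (y k) ⟨k, rfl⟩).2⟩
  left_inv _ := rfl
  right_inv e := by
    funext x
    ext ⟨k, rfl⟩
    rfl

theorem card_filter_comp_perm_eq (z y : Fin N → X) (h : countMap N y = countMap N z) :
    #{π : Equiv.Perm (Fin N) | z ∘ π = y} = ∏ x, ((countMap N z).1 x)! := by
  rw [← Fintype.card_subtype, Fintype.card_congr (permFiberEquiv z y), Fintype.card_pi]
  refine Finset.prod_congr rfl fun x _ => ?_
  have hcard : Fintype.card {k // y k = x} = Fintype.card {k // z k = x} := by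
    rw [Fintype.card_subtype, Fintype.card_subtype]
    exact congrFun (congrArg Subtype.val h) x
  rw [Fintype.card_equiv (Fintype.equivOfCardEq hcard), hcard, Fintype.card_subtype]
  rfl

theorem sum_perm_comp {M : Type*} [AddCommMonoid M] (z : Fin N → X) (f : (Fin N → X) → M) :
    ∑ π : Equiv.Perm (Fin N), f (z ∘ π)
      = (∏ x, ((countMap N z).1 x)!) • ∑ y with countMap N y = countMap N z, f y := by
  rw [← Finset.sum_fiberwise (g := fun π : Equiv.Perm (Fin N) => z ∘ π), Finset.smul_sum,
    Finset.sum_filter]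
  refine Finset.sum_congr rfl fun y _ => ?_
  rw [Finset.sum_congr rfl fun π hπ => congrArg f (Finset.mem_filter.mp hπ).2, Finset.sum_const]
  split_ifs with h
  · rw [card_filter_comp_perm_eq z y h]
  · have hempty : ∀ π : Equiv.Perm (Fin N), z ∘ π ≠ y := fun π hπ =>
      h (hπ ▸ countMap_comp_perm z π)
    rw [Finset.filter_false_of_mem fun π _ => hempty π, Finset.card_empty, zero_smul]

theorem exists_countMap_eq (m : CVec X N) : ∃ z : Fin N → X, countMap N z = m := by
  have hcard : Fintype.card (Fin N) = Fintype.card (Σ x : X, Fin (m.1 x)) := by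
    simp [Fintype.card_sigma, m.2]
  let e := Fintype.equivOfCardEq hcard
  refine ⟨fun k => (e k).1, Subtype.ext (funext fun x => ?_)⟩
  change #{k | (e k).1 = x} = m.1 x
  rw [← Fintype.card_subtype,
    Fintype.card_congr ((e.subtypeEquiv fun _ => Iff.rfl).trans (Equiv.sigmaSubtype x)),
    Fintype.card_fin]

theorem card_filter_countMap_eq (m : CVec X N) : #{z : Fin N → X | countMap N z = m} = nu m := by
  obtain ⟨z, rfl⟩ := exists_countMap_eq m
  have hperm := sum_perm_comp (M := ℕ) z fun _ => 1
  simp only [Finset.sum_const, Finset.card_univ, Fintype.card_perm, Fintype.card_fin,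
    smul_eq_mul, mul_one] at hperm
  have hnu := Nat.multinomial_spec Finset.univ (countMap N z).1
  rw [(countMap N z).2, hperm] at hnu
  exact (Nat.eq_of_mul_eq_mul_left (Finset.prod_pos fun x _ => factorial_pos _) hnu).symm

theorem sum_filter_countMap_eq (f : (Fin N → X) → ℝ) (m : CVec X N) :
    ∑ z with countMap N z = m, f z = nu m * MuHy f m := by
  rw [MuHy, mul_div_cancel₀]
  exact_mod_cast (Nat.multinomial_pos _ _).ne'

theorem sum_perm_comp_eq_MuHy (f : (Fin N → X) → ℝ) (z : Fin N → X) :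
    ∑ π : Equiv.Perm (Fin N), f (z ∘ π) = N ! * MuHy f (countMap N z) := by
  rw [sum_perm_comp, sum_filter_countMap_eq, nsmul_eq_mul, ← mul_assoc]
  have hnu := Nat.multinomial_spec Finset.univ (countMap N z).1
  rw [(countMap N z).2] at hnu
  rw [← hnu, Nat.cast_mul]
  rfl

theorem MuHy_comp_countMap (g : CVec X N → ℝ) (m : CVec X N) :
    MuHy (fun z => g (countMap N z)) m = g m := by
  rw [MuHy, Finset.sum_congr rfl fun z hz => congrArg g (Finset.mem_filter.mp hz).2,
    Finset.sum_const, card_filter_countMap_eq, nsmul_eq_mul, mul_div_cancel_left₀]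
  exact_mod_cast (Nat.multinomial_pos _ _).ne'

theorem MuHy_mono {f g : (Fin N → X) → ℝ} (h : f ≤ g) (m : CVec X N) : MuHy f m ≤ MuHy g m :=
  div_le_div_of_nonneg_right (Finset.sum_le_sum fun z _ => h z) (Nat.cast_nonneg _)

theorem sInf_range_le_MuHy (f : (Fin N → X) → ℝ) (m : CVec X N) :
    sInf (Set.range f) ≤ MuHy f m := by
  calc sInf (Set.range f) = MuHy (fun _ => sInf (Set.range f)) m :=
        (MuHy_comp_countMap (fun _ => _) m).symm
    _ ≤ MuHy f m :=
        MuHy_mono (fun z => csInf_le (Set.finite_range f).bddBelow (Set.mem_range_self z)) m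

theorem MuHy_comp_perm (f : (Fin N → X) → ℝ) (π : Equiv.Perm (Fin N)) (m : CVec X N) :
    MuHy (fun z => f (z ∘ π)) m = MuHy f m := by
  rw [MuHy, MuHy]
  congr 1
  refine Finset.sum_nbij' (· ∘ π) (· ∘ π.symm) ?_ ?_ (fun z _ => ?_) (fun z _ => ?_) fun _ _ => rfl
  · simp [countMap_comp_perm]
  · simp [countMap_comp_perm]
  · ext; simp
  · ext; simp

noncomputable def MuHyLin : ((Fin N → X) → ℝ) →ₗ[ℝ] (CVec X N → ℝ) where
  toFun := MuHy
  map_add' f g := funext fun m => by simp only [MuHy, Pi.add_apply, Finset.sum_add_distrib, add_div]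
  map_smul' l f := funext fun m => by
    simp only [MuHy, Pi.smul_apply, smul_eq_mul, ← Finset.mul_sum, mul_div_assoc, RingHom.id_apply]

end Orbits

section Exchangeability

open Nat

variable {X : Type*} [Fintype X] [Nonempty X] {N : ℕ}

theorem Exchangeable.le_comp_perm {P : ((Fin N → X) → ℝ) → ℝ} (hex : Exchangeable P)
    (hP : LowerPrevCoherent P) (f : (Fin N → X) → ℝ) (π : Equiv.Perm (Fin N)) :
    P f ≤ P (fun z => f (z ∘ π)) := by
  have hsum := hP.2.2 f (fun z => f (z ∘ π) - f z)
  rw [show (f + fun z => f (z ∘ π) - f z) = fun z => f (z ∘ π) by ext; simp] at hsum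
  have hdiff : 0 ≤ P (fun z => f (z ∘ π) - f z) := hex f π
  linarith

theorem Exchangeable.le_MuHy_comp_countMap [DecidableEq X] {P : ((Fin N → X) → ℝ) → ℝ}
    (hex : Exchangeable P)
    (hP : LowerPrevCoherent P) (f : (Fin N → X) → ℝ) :
    P f ≤ P (fun z => MuHy f (countMap N z)) := by
  have hN : (0 : ℝ) < N ! := by exact_mod_cast factorial_pos N
  have hsym : (fun z => (N ! : ℝ) * MuHy f (countMap N z))
      = ∑ π : Equiv.Perm (Fin N), fun z => f (z ∘ π) := by
    ext z
    rw [Finset.sum_apply, sum_perm_comp_eq_MuHy]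
  refine le_of_mul_le_mul_left ?_ hN
  calc (N ! : ℝ) * P f = ∑ _π : Equiv.Perm (Fin N), P f := by
        simp [Fintype.card_perm]
    _ ≤ ∑ π : Equiv.Perm (Fin N), P (fun z => f (z ∘ π)) :=
        Finset.sum_le_sum fun π _ => hex.le_comp_perm hP f π
    _ ≤ P (∑ π : Equiv.Perm (Fin N), fun z => f (z ∘ π)) := hP.sum_le _ _
    _ = N ! * P (fun z => MuHy f (countMap N z)) := by rw [← hsym, hP.2.1 _ _ hN.le]

theorem LowerPrevCoherent.exchangeable_comp_MuHy [DecidableEq X] {E : (CVec X N → ℝ) → ℝ}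
    (hE : LowerPrevCoherent E) : Exchangeable fun f => E (MuHy f) := by
  intro f π
  have hzero : MuHy (fun z => f (z ∘ π) - f z) = 0 := by
    change MuHyLin ((fun z => f (z ∘ π)) - f) = 0
    rw [map_sub]
    ext m
    exact sub_eq_zero.mpr (MuHy_comp_perm f π m)
  change 0 ≤ E (MuHy fun z => f (z ∘ π) - f z)
  rw [hzero, hE.map_zero]

end Exchangeability

section Marginalization

variable {X : Type*} [Fintype X] [DecidableEq X] {n k : ℕ}

theorem countMap_append (y : Fin n → X) (t : Fin k → X) :
    (countMap (n + k) (Fin.append y t)).1 = (countMap n y).1 + (countMap k t).1 := by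
  ext x
  simp only [countMap, Pi.add_apply, Finset.card_filter, Fin.sum_univ_add, Fin.append_left,
    Fin.append_right]

theorem card_filter_add_countMap_eq (m : CVec X n) (μ : CVec X (n + k)) :
    #{t : Fin k → X | m.1 + (countMap k t).1 = μ.1} = nuSub μ m := by
  by_cases hle : ∀ x, m.1 x ≤ μ.1 x
  · have hsum : ∑ x, (μ.1 x - m.1 x) = k := by
      have := Finset.sum_tsub_distrib Finset.univ fun x _ => hle x
      rw [this, m.2, μ.2]
      omega
    rw [nuSub, if_pos hle]
    refine .trans ?_ (card_filter_countMap_eq (⟨_, hsum⟩ : CVec X k))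
    refine congrArg Finset.card (Finset.filter_congr fun t _ => ?_)
    simp only [funext_iff, Pi.add_apply, Subtype.ext_iff]
    exact forall_congr' fun x => by have := hle x; omega
  · rw [nuSub, if_neg hle, Finset.card_eq_zero, Finset.filter_eq_empty_iff]
    exact fun t _ ht => hle fun x => ht ▸ Nat.le_add_right _ _

theorem gbar_MuHy (f : (Fin n → X) → ℝ) (μ : CVec X (n + k)) :
    gbar (MuHy f) μ = MuHy (cylExt f) μ := by
  have hsplit : ∑ w with countMap (n + k) w = μ, cylExt f w
      = ∑ y : Fin n → X, (nuSub μ (countMap n y) : ℝ) * f y := by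
    rw [Finset.sum_filter, ← (Fin.appendEquiv n k).sum_comp, Fintype.sum_prod_type]
    refine Finset.sum_congr rfl fun y _ => ?_
    have hcyl (t : Fin k → X) : cylExt f (Fin.append y t) = f y :=
      congrArg f (funext fun i => Fin.append_left y t i)
    simp only [Fin.appendEquiv, Equiv.coe_fn_mk, hcyl, ← Finset.sum_filter, Finset.sum_const,
      nsmul_eq_mul, Subtype.ext_iff, countMap_append, card_filter_add_countMap_eq]
  rw [gbar, MuHy, hsplit, ← Finset.sum_fiberwise (g := countMap n), Finset.sum_div]
  refine Finset.sum_congr rfl fun m _ => ?_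
  rw [Finset.sum_congr rfl fun y hy => by rw [(Finset.mem_filter.mp hy).2], ← Finset.mul_sum,
    sum_filter_countMap_eq]
  ring

theorem gbar_const (c : ℝ) (μ : CVec X (n + k)) : gbar (fun _ : CVec X n => c) μ = c := by
  have hconst (N : ℕ) : MuHy (fun _ : Fin N → X => c) = fun _ => c :=
    funext (MuHy_comp_countMap fun _ => c)
  have := gbar_MuHy (k := k) (fun _ : Fin n → X => c) μ
  rwa [hconst, show cylExt (k := k) (fun _ : Fin n → X => c) = fun _ => c from rfl, hconst] at this

noncomputable def gbarLin : (CVec X n → ℝ) →ₗ[ℝ] (CVec X (n + k) → ℝ) where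
  toFun := gbar
  map_add' g₁ g₂ := funext fun μ => by
    simp only [gbar, Pi.add_apply, mul_add, Finset.sum_add_distrib]
  map_smul' l g := funext fun μ => by
    simp only [gbar, Pi.smul_apply, smul_eq_mul, Finset.mul_sum, RingHom.id_apply]
    exact Finset.sum_congr rfl fun m _ => by ring

end Marginalization

theorem stmt17_general {X : Type*} [Fintype X] [DecidableEq X] [Nonempty X] {n k : ℕ}
    (P : ((Fin n → X) → ℝ) → ℝ)
    (hP : LowerPrevCoherent P) (hex : Exchangeable P)
    (Q : (CVec X n → ℝ) → ℝ)
    (hQ : ∀ h : CVec X n → ℝ, Q h = P (fun z => h (countMap n z))) :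
    (∃ E : ((Fin (n + k) → X) → ℝ) → ℝ,
        LowerPrevCoherent E ∧ Exchangeable E ∧
          ∀ f : (Fin n → X) → ℝ, P f ≤ E (cylExt f)) ↔
      ∀ g : CVec X n → ℝ, ∃ μ : CVec X (n + k), Q g ≤ gbar g μ := by
  have hQc : LowerPrevCoherent Q := by
    rw [show Q = fun h => P (LinearMap.funLeft ℝ ℝ (countMap n) h) from funext hQ]
    exact hP.comp_linearMap _ fun h z =>
      csInf_le (Set.finite_range h).bddBelow (Set.mem_range_self _)
  constructor
  · rintro ⟨E, hE, hEex, hPE⟩ g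
    obtain ⟨μ, -, hμ⟩ := Finset.exists_max_image Finset.univ (gbar g) Finset.univ_nonempty
    refine ⟨μ, ?_⟩
    have hmarg : MuHy (cylExt fun z => g (countMap n z)) = gbar (k := k) g := by
      ext ν
      rw [← gbar_MuHy, funext (MuHy_comp_countMap g)]
    calc Q g = P (fun z => g (countMap n z)) := hQ g
      _ ≤ E (cylExt fun z => g (countMap n z)) := hPE _
      _ ≤ E (fun w => gbar g (countMap (n + k) w)) := hmarg ▸ hEex.le_MuHy_comp_countMap hE _
      _ ≤ gbar g μ := hE.le_of_forall_le fun w => hμ _ (Finset.mem_univ _)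
  · intro hdom
    have hL (c : ℝ) : gbarLin (k := k) (fun _ : CVec X n => c) = fun _ => c :=
      funext (gbar_const c)
    have hE' := hQc.naturalExtension hL hdom
    refine ⟨fun f => naturalExtension Q gbarLin (MuHyLin f),
      hE'.comp_linearMap _ sInf_range_le_MuHy, hE'.exchangeable_comp_MuHy, fun f => ?_⟩
    calc P f ≤ P (fun z => MuHy f (countMap n z)) := hex.le_MuHy_comp_countMap hP f
      _ = Q (MuHy f) := (hQ _).symm
      _ ≤ naturalExtension Q gbarLin (MuHyLin (cylExt f)) :=
        le_naturalExtension hdom fun μ => (gbar_MuHy f μ).le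

/-- a coherent exchangeable lower prevision on `ℒ(X^n)` extends to a coherent
exchangeable lower prevision on `ℒ(X^{n+k})` iff `max_μ ḡ(μ) ≥ Q^n(g)` for every gamble
`g` on `𝒩^n`. -/
theorem stmt17 {X : Type*} [Fintype X] [DecidableEq X] [Nonempty X] {n k : ℕ} (hn : 1 ≤ n)
    (P : ((Fin n → X) → ℝ) → ℝ)
    (hP : LowerPrevCoherent P) (hex : Exchangeable P)
    (Q : (CVec X n → ℝ) → ℝ)
    (hQ : ∀ h : CVec X n → ℝ, Q h = P (fun z => h (countMap n z))) :
    (∃ E : ((Fin (n + k) → X) → ℝ) → ℝ,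
        LowerPrevCoherent E ∧ Exchangeable E ∧
          ∀ f : (Fin n → X) → ℝ, P f ≤ E (cylExt f)) ↔
      ∀ g : CVec X n → ℝ, ∃ μ : CVec X (n + k), Q g ≤ gbar g μ :=
  stmt17_general P hP hex Q hQ
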